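/- Let k ≥ 1 and consider an SMP network of k layers given by functions (m_l, φ_l, u_l), 0 ≤ l < k, each permutation equivariant in the sense that m_l(P·U, P·U', y) = P·m_l(U, U', y), φ_l({P·M : M ∈ S}) = P·φ_l(S) and u_l(P·U, P·U') = P·u_l(U, U') for every n×n permutation matrix P, applied from the one-hot initialization U_i^{(0)} = 𝟙_i on a simple graph G on n vertices (with edge features y). Let v_i and v_j be two vertices such that there is an isomorphism ψ between the subgraphs of G induced on the closed k-hop neighborhoods of v_i and of v_j, with ψ(v_i) = v_j and preserving the edge features. Then the final local contexts of v_i and v_j are equal up to a permutation of their rows: there is a permutation τ of {1,…,n} extending ψ with U_i^{(k)}[p,:] = U_j^{(k)}[τ(p),:] for all p. Consequently, any readout invariant under row permutations of the local context yields the same output at v_i and v_j. -/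

import Mathlib

open scoped Classical

/-- Row-permutation action of a permutation on a matrix: `(permRows π U)[p,:] = U[π p,:]`. -/
def permRows {n c : ℕ} (π : Equiv.Perm (Fin n)) (U : Matrix (Fin n) (Fin c) ℝ) :
    Matrix (Fin n) (Fin c) ℝ :=
  U.submatrix π id

/-!
Extend `ψ` to a permutation `τ` of all vertices and show, by induction on the layer `l`,
that `U l p = permRows τ (U l (τ p))` for every vertex `p` reachable from `v_i` with
`dist v_i p + l ≤ k`. The one-hot initialization satisfies this for every `τ`; a layer
preserves it at `p` because all neighbours of `p` lie in the ball and `τ` maps them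
bijectively onto the neighbours of `τ p`, so the multiset of messages at `τ p` is the
`τ`-permuted multiset of messages at `p`. The only graph-theoretic input is that `τ`,
being adjacency-preserving on the ball, does not increase distances to the centre.
Since `SimpleGraph.dist` is `0` between vertices in different components, the "ball"
`{p // G.dist i p ≤ k}` also contains every vertex not reachable from `v_i`; this is why
the induction only speaks about reachable vertices.
-/

namespace SimpleGraph

variable {V W : Type*} {G : SimpleGraph V} {H : SimpleGraph W}

theorem Adj.dist_le_add_one {p q : V} (h : G.Adj p q) (i : V) :
    G.dist i q ≤ G.dist i p + 1 :=
  (dist_eq_one_iff_adj.mpr h) ▸ h.reachable.dist_triangle_right i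

theorem Walk.exists_walk_length_eq_of_adj_map (f : V → W) :
    ∀ {u v : V} (w : G.Walk u v), (∀ d ∈ w.darts, H.Adj (f d.fst) (f d.snd)) →
      ∃ w' : H.Walk (f u) (f v), w'.length = w.length
  | _, _, .nil, _ => ⟨.nil, rfl⟩
  | _, _, .cons _ w, hw => by
    obtain ⟨w', hw'⟩ :=
      w.exists_walk_length_eq_of_adj_map f fun d hd => hw d (List.mem_cons_of_mem _ hd)
    exact ⟨.cons (hw _ List.mem_cons_self) w', by simp [hw']⟩

theorem dist_map_le_of_adj_on_ball {f : V → W} {i p : V} {k : ℕ}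
    (hf : ∀ q r, G.dist i q ≤ k → G.dist i r ≤ k → G.Adj q r → H.Adj (f q) (f r))
    (hp : G.Reachable i p) (hpk : G.dist i p ≤ k) :
    H.dist (f i) (f p) ≤ G.dist i p := by
  obtain ⟨w, hw⟩ := hp.exists_walk_length_eq_dist
  have hball : ∀ x ∈ w.support, G.dist i x ≤ k := fun x hx =>
    ((dist_le (w.takeUntil x hx)).trans (w.length_takeUntil_le_length hx)).trans (hw ▸ hpk)
  obtain ⟨w', hw'⟩ := w.exists_walk_length_eq_of_adj_map f fun d hd =>
    hf _ _ (hball _ (w.dart_fst_mem_support_of_mem_darts hd))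
      (hball _ (w.dart_snd_mem_support_of_mem_darts hd)) d.adj
  exact hw ▸ hw' ▸ dist_le w'

theorem adj_iff_adj_perm_of_dist_lt {τ : Equiv.Perm V} {i : V} {k : ℕ}
    (hadj : ∀ p q, G.dist i p ≤ k → G.dist i q ≤ k → (G.Adj p q ↔ G.Adj (τ p) (τ q)))
    (hball : ∀ q, G.dist (τ i) (τ q) ≤ k → G.dist i q ≤ k)
    {p : V} (hp : G.Reachable i p) (hpk : G.dist i p < k) (q : V) :
    G.Adj p q ↔ G.Adj (τ p) (τ q) := by
  have hτp : G.dist (τ i) (τ p) ≤ G.dist i p :=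
    dist_map_le_of_adj_on_ball (fun q r hq hr => (hadj q r hq hr).mp) hp hpk.le
  refine ⟨fun h => (hadj p q hpk.le ?_).mp h, fun h => (hadj p q hpk.le (hball q ?_)).mpr h⟩
  · have := h.dist_le_add_one i
    omega
  · have := h.dist_le_add_one (τ i)
    omega

end SimpleGraph

theorem permRows_oneHot {n c : ℕ} (τ : Equiv.Perm (Fin n)) (i : Fin n) :
    permRows τ (Matrix.of fun p (_ : Fin c) => if p = τ i then (1 : ℝ) else 0) =
      Matrix.of fun p _ => if p = i then 1 else 0 := by
  ext p
  simp [permRows]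

section SMP

variable {n c b c' : ℕ} {Y : Type*}

noncomputable def smpLayer
    (m : Matrix (Fin n) (Fin c) ℝ → Matrix (Fin n) (Fin c) ℝ → Y → Matrix (Fin n) (Fin b) ℝ)
    (φ : Multiset (Matrix (Fin n) (Fin b) ℝ) → Matrix (Fin n) (Fin b) ℝ)
    (u : Matrix (Fin n) (Fin c) ℝ → Matrix (Fin n) (Fin b) ℝ → Matrix (Fin n) (Fin c') ℝ)
    (G : SimpleGraph (Fin n)) (y : Fin n → Fin n → Y) (X : Fin n → Matrix (Fin n) (Fin c) ℝ)
    (p : Fin n) : Matrix (Fin n) (Fin c') ℝ :=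
  u (X p) (φ ((G.neighborFinset p).val.map fun q => m (X p) (X q) (y p q)))

theorem smpLayer_eq_permRows
    {m : Matrix (Fin n) (Fin c) ℝ → Matrix (Fin n) (Fin c) ℝ → Y → Matrix (Fin n) (Fin b) ℝ}
    {φ : Multiset (Matrix (Fin n) (Fin b) ℝ) → Matrix (Fin n) (Fin b) ℝ}
    {u : Matrix (Fin n) (Fin c) ℝ → Matrix (Fin n) (Fin b) ℝ → Matrix (Fin n) (Fin c') ℝ}
    {G : SimpleGraph (Fin n)} {y : Fin n → Fin n → Y} {X : Fin n → Matrix (Fin n) (Fin c) ℝ}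
    (τ : Equiv.Perm (Fin n))
    (hm : ∀ U U' e, m (permRows τ U) (permRows τ U') e = permRows τ (m U U' e))
    (hφ : ∀ S, φ (S.map (permRows τ)) = permRows τ (φ S))
    (hu : ∀ U U', u (permRows τ U) (permRows τ U') = permRows τ (u U U'))
    {p : Fin n} (hadj : ∀ q, G.Adj p q ↔ G.Adj (τ p) (τ q))
    (hy : ∀ q, G.Adj p q → y p q = y (τ p) (τ q))
    (hXp : X p = permRows τ (X (τ p))) (hXq : ∀ q, G.Adj p q → X q = permRows τ (X (τ q))) :
    smpLayer m φ u G y X p = permRows τ (smpLayer m φ u G y X (τ p)) := by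
  have hN : G.neighborFinset (τ p) = (G.neighborFinset p).map τ.toEmbedding := by
    ext r
    simp only [Finset.mem_map, SimpleGraph.mem_neighborFinset, Equiv.coe_toEmbedding]
    refine ⟨fun h => ⟨τ.symm r, by rwa [hadj, τ.apply_symm_apply], τ.apply_symm_apply r⟩, ?_⟩
    rintro ⟨q, hpq, rfl⟩
    exact (hadj q).mp hpq
  have hmsg : (G.neighborFinset p).val.map (fun q => m (X p) (X q) (y p q)) =
      ((G.neighborFinset (τ p)).val.map fun r => m (X (τ p)) (X r) (y (τ p) r)).map
        (permRows τ) := by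
    rw [hN, Finset.map_val, Multiset.map_map, Multiset.map_map]
    refine Multiset.map_congr rfl fun q hq => ?_
    have hpq := (G.mem_neighborFinset p q).mp hq
    simp only [Function.comp_apply, Equiv.coe_toEmbedding]
    rw [hXp, hXq q hpq, hy q hpq, hm]
  rw [smpLayer, smpLayer, hmsg, hφ, hXp, hu]

end SMP

theorem smp_context_eq_permRows {n cY : ℕ} {c b : ℕ → ℕ}
    {m : (l : ℕ) → Matrix (Fin n) (Fin (c l)) ℝ → Matrix (Fin n) (Fin (c l)) ℝ →
      (Fin cY → ℝ) → Matrix (Fin n) (Fin (b l)) ℝ}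
    {φ : (l : ℕ) → Multiset (Matrix (Fin n) (Fin (b l)) ℝ) → Matrix (Fin n) (Fin (b l)) ℝ}
    {u : (l : ℕ) → Matrix (Fin n) (Fin (c l)) ℝ → Matrix (Fin n) (Fin (b l)) ℝ →
      Matrix (Fin n) (Fin (c (l + 1))) ℝ}
    {G : SimpleGraph (Fin n)} {y : Fin n → Fin n → (Fin cY → ℝ)}
    {U : (l : ℕ) → Fin n → Matrix (Fin n) (Fin (c l)) ℝ}
    (τ : Equiv.Perm (Fin n))
    (hm : ∀ l U U' e, m l (permRows τ U) (permRows τ U') e = permRows τ (m l U U' e))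
    (hφ : ∀ l S, φ l (S.map (permRows τ)) = permRows τ (φ l S))
    (hu : ∀ l U U', u l (permRows τ U) (permRows τ U') = permRows τ (u l U U'))
    (hU0 : ∀ i, U 0 i = Matrix.of fun p _ => if p = i then (1 : ℝ) else 0)
    (hUrec : ∀ l p, U (l + 1) p = smpLayer (m l) (φ l) (u l) G y (U l) p)
    {i : Fin n} {k : ℕ}
    (hadj : ∀ p, G.Reachable i p → G.dist i p < k → ∀ q, G.Adj p q ↔ G.Adj (τ p) (τ q))
    (hy : ∀ p q, G.dist i p < k → G.Adj p q → y p q = y (τ p) (τ q)) :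
    ∀ l p, G.Reachable i p → G.dist i p + l ≤ k → U l p = permRows τ (U l (τ p)) := by
  intro l
  induction l with
  | zero => exact fun p _ _ => by rw [hU0, hU0, permRows_oneHot]
  | succ l ih =>
    intro p hp hpk
    rw [hUrec, hUrec]
    refine smpLayer_eq_permRows τ (hm l) (hφ l) (hu l) (hadj p hp (by omega))
      (fun q => hy p q (by omega)) (ih p hp (by omega)) fun q hpq => ?_
    have := hpq.dist_le_add_one i
    exact ih q (hp.trans hpq.reachable) (by omega)

theorem smp_invariant_to_local_isomorphisms_general (n k cY : ℕ)
    (c b : ℕ → ℕ)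
    (m : (l : ℕ) → Matrix (Fin n) (Fin (c l)) ℝ → Matrix (Fin n) (Fin (c l)) ℝ →
      (Fin cY → ℝ) → Matrix (Fin n) (Fin (b l)) ℝ)
    (φ : (l : ℕ) → Multiset (Matrix (Fin n) (Fin (b l)) ℝ) →
      Matrix (Fin n) (Fin (b l)) ℝ)
    (u : (l : ℕ) → Matrix (Fin n) (Fin (c l)) ℝ → Matrix (Fin n) (Fin (b l)) ℝ →
      Matrix (Fin n) (Fin (c (l + 1))) ℝ)
    (hm : ∀ (l : ℕ) (π : Equiv.Perm (Fin n)) U U' y,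
      m l (permRows π U) (permRows π U') y = permRows π (m l U U' y))
    (hφ : ∀ (l : ℕ) (π : Equiv.Perm (Fin n)) S,
      φ l (S.map (permRows π)) = permRows π (φ l S))
    (hu : ∀ (l : ℕ) (π : Equiv.Perm (Fin n)) U U',
      u l (permRows π U) (permRows π U') = permRows π (u l U U'))
    (G : SimpleGraph (Fin n)) (y : Fin n → Fin n → (Fin cY → ℝ))
    (U : (l : ℕ) → Fin n → Matrix (Fin n) (Fin (c l)) ℝ)
    (hU0 : ∀ i, U 0 i = Matrix.of fun p _ => if p = i then (1 : ℝ) else 0)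
    (hUrec : ∀ l i, U (l + 1) i = u l (U l i)
      (φ l ((G.neighborFinset i).val.map (fun j => m l (U l i) (U l j) (y i j)))))
    (i j : Fin n)
    (ψ : {p : Fin n // G.dist i p ≤ k} ≃ {p : Fin n // G.dist j p ≤ k})
    (hψi : ∀ h : G.dist i i ≤ k, ((ψ ⟨i, h⟩ : {p : Fin n // G.dist j p ≤ k}) : Fin n) = j)
    (hψadj : ∀ p q : {p : Fin n // G.dist i p ≤ k},
      G.Adj p.1 q.1 ↔ G.Adj (ψ p).1 (ψ q).1)
    (hψy : ∀ p q : {p : Fin n // G.dist i p ≤ k},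
      G.Adj p.1 q.1 → y p.1 q.1 = y (ψ p).1 (ψ q).1) :
    ∃ τ : Equiv.Perm (Fin n),
      (∀ p : {p : Fin n // G.dist i p ≤ k}, τ p.1 = (ψ p).1) ∧
      (∀ p : Fin n, U k i p = U k j (τ p)) ∧
      (∀ (O : Type) (ρ : Matrix (Fin n) (Fin (c k)) ℝ → O),
        (∀ (π : Equiv.Perm (Fin n)) (M : Matrix (Fin n) (Fin (c k)) ℝ),
          ρ (permRows π M) = ρ M) →
        ρ (U k i) = ρ (U k j)) := by
  let τ : Equiv.Perm (Fin n) := ψ.extendSubtype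
  have hτ (p : Fin n) (hp : G.dist i p ≤ k) : τ p = ψ ⟨p, hp⟩ :=
    ψ.extendSubtype_apply_of_mem p hp
  have hii : G.dist i i ≤ k := by simp
  have hτi : τ i = j := (hτ i hii).trans (hψi hii)
  have hadj (p q : Fin n) (hp : G.dist i p ≤ k) (hq : G.dist i q ≤ k) :
      G.Adj p q ↔ G.Adj (τ p) (τ q) := by
    rw [hτ p hp, hτ q hq]
    exact hψadj ⟨p, hp⟩ ⟨q, hq⟩
  have hball (q : Fin n) : G.dist (τ i) (τ q) ≤ k → G.dist i q ≤ k := by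
    rw [hτi]
    exact not_imp_not.mp (ψ.extendSubtype_not_mem q)
  have hy (p q : Fin n) (hpk : G.dist i p < k) (hpq : G.Adj p q) :
      y p q = y (τ p) (τ q) := by
    have hqk : G.dist i q ≤ k := by have := hpq.dist_le_add_one i; omega
    rw [hτ p hpk.le, hτ q hqk]
    exact hψy ⟨p, hpk.le⟩ ⟨q, hqk⟩ hpq
  have hfin : U k i = permRows τ (U k j) := hτi ▸
    smp_context_eq_permRows τ (fun l => hm l τ) (fun l => hφ l τ) (fun l => hu l τ) hU0 hUrec
      (fun p hp hpk => SimpleGraph.adj_iff_adj_perm_of_dist_lt hadj hball hp hpk) hy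
      k i (SimpleGraph.Reachable.refl i) (by simp)
  exact ⟨τ, fun p => hτ p.1 p.2, fun p => by rw [hfin]; rfl, fun O ρ hρ => by rw [hfin, hρ]⟩

/-- invariance to local isomorphisms, Section 3.2. Run a `k`-layer
SMP with permutation-equivariant message, aggregation and update functions from the
one-hot initialization. If `ψ` is an isomorphism between the subgraphs induced on the
closed `k`-hop neighborhoods of `v_i` and `v_j`, sending `v_i` to `v_j` and preserving
edge features, then the final local contexts of `v_i` and `v_j` agree up to a row
permutation `τ` extending `ψ`; consequently any readout invariant under row permutations
gives the same output at `v_i` and `v_j`. -/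
theorem smp_invariant_to_local_isomorphisms (n k cY : ℕ) (hk : 1 ≤ k)
    (c b : ℕ → ℕ) (hc0 : c 0 = 1)
    (m : (l : ℕ) → Matrix (Fin n) (Fin (c l)) ℝ → Matrix (Fin n) (Fin (c l)) ℝ →
      (Fin cY → ℝ) → Matrix (Fin n) (Fin (b l)) ℝ)
    (φ : (l : ℕ) → Multiset (Matrix (Fin n) (Fin (b l)) ℝ) →
      Matrix (Fin n) (Fin (b l)) ℝ)
    (u : (l : ℕ) → Matrix (Fin n) (Fin (c l)) ℝ → Matrix (Fin n) (Fin (b l)) ℝ →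
      Matrix (Fin n) (Fin (c (l + 1))) ℝ)
    (hm : ∀ (l : ℕ) (π : Equiv.Perm (Fin n)) U U' y,
      m l (permRows π U) (permRows π U') y = permRows π (m l U U' y))
    (hφ : ∀ (l : ℕ) (π : Equiv.Perm (Fin n)) S,
      φ l (S.map (permRows π)) = permRows π (φ l S))
    (hu : ∀ (l : ℕ) (π : Equiv.Perm (Fin n)) U U',
      u l (permRows π U) (permRows π U') = permRows π (u l U U'))
    (G : SimpleGraph (Fin n)) (y : Fin n → Fin n → (Fin cY → ℝ))
    (U : (l : ℕ) → Fin n → Matrix (Fin n) (Fin (c l)) ℝ)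
    (hU0 : ∀ i, U 0 i = Matrix.of fun p _ => if p = i then (1 : ℝ) else 0)
    (hUrec : ∀ l i, U (l + 1) i = u l (U l i)
      (φ l ((G.neighborFinset i).val.map (fun j => m l (U l i) (U l j) (y i j)))))
    (i j : Fin n)
    (ψ : {p : Fin n // G.dist i p ≤ k} ≃ {p : Fin n // G.dist j p ≤ k})
    (hψi : ∀ h : G.dist i i ≤ k, ((ψ ⟨i, h⟩ : {p : Fin n // G.dist j p ≤ k}) : Fin n) = j)
    (hψadj : ∀ p q : {p : Fin n // G.dist i p ≤ k},
      G.Adj p.1 q.1 ↔ G.Adj (ψ p).1 (ψ q).1)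
    (hψy : ∀ p q : {p : Fin n // G.dist i p ≤ k},
      G.Adj p.1 q.1 → y p.1 q.1 = y (ψ p).1 (ψ q).1) :
    ∃ τ : Equiv.Perm (Fin n),
      (∀ p : {p : Fin n // G.dist i p ≤ k}, τ p.1 = (ψ p).1) ∧
      (∀ p : Fin n, U k i p = U k j (τ p)) ∧
      (∀ (O : Type) (ρ : Matrix (Fin n) (Fin (c k)) ℝ → O),
        (∀ (π : Equiv.Perm (Fin n)) (M : Matrix (Fin n) (Fin (c k)) ℝ),
          ρ (permRows π M) = ρ M) →
        ρ (U k i) = ρ (U k j)) :=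
  smp_invariant_to_local_isomorphisms_general n k cY c b m φ u hm hφ hu G y U hU0 hUrec i j ψ hψi
    hψadj hψy
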